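/- Let X be a nonempty subset of the real line ℝ that is unbounded above and unbounded below, and suppose d_H(X, ℝ) = ∞. Then the ultrametric pseudodiameter of X (in the induced metric) is infinite: diam_u X = ∞. -/

import Mathlib

open scoped ENNReal

noncomputable section

/-- Ultrametric pseudodistance: infimum over chains from `x` to `y` of the
maximal edge length of the chain. -/
noncomputable def ultraDist {X : Type*} [MetricSpace X] (x y : X) : ℝ≥0∞ :=
  ⨅ (n : ℕ) (f : Fin (n + 1) → X) (_ : f 0 = x) (_ : f (Fin.last n) = y),
    ⨆ i : Fin n, edist (f i.castSucc) (f i.succ)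

/-- Ultrametric pseudodiameter. -/
noncomputable def ultraDiam (X : Type*) [MetricSpace X] : ℝ≥0∞ :=
  ⨆ (x : X) (y : X), ultraDist x y

/-- A correspondence between `X` and `Y`: a relation whose projections are surjective. -/
def IsCorrespondence {X Y : Type*} (R : Set (X × Y)) : Prop :=
  (∀ x : X, ∃ y : Y, (x, y) ∈ R) ∧ (∀ y : Y, ∃ x : X, (x, y) ∈ R)

/-- Distortion of a relation. -/
noncomputable def distortion {X Y : Type*} [MetricSpace X] [MetricSpace Y]
    (R : Set (X × Y)) : ℝ≥0∞ :=
  ⨆ (p ∈ R) (q ∈ R), ENNReal.ofReal |dist p.1 q.1 - dist p.2 q.2|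

/-- Gromov–Hausdorff distance: half the infimal distortion of correspondences. -/
noncomputable def ghDist (X Y : Type*) [MetricSpace X] [MetricSpace Y] : ℝ≥0∞ :=
  (⨅ (R : Set (X × Y)) (_ : IsCorrespondence R), distortion R) / 2

/-!
Given `r`, the hypothesis `d_H(X, ℝ) = ∞` yields a point `t` with `dist(t, X) ≥ r`. Since `X` is
unbounded in both directions, `t` splits `X` into two nonempty parts, below and above `t`, and
two points of `X` on opposite sides of `t` are at distance at least `r`. Hence every chain in `X`
from the lower part to the upper one has an edge of length at least `r`.
-/

open Metric

lemma le_ultraDist_of_forall_le_edist {X : Type*} [MetricSpace X] {A : Set X} {r : ℝ≥0∞}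
    (hA : ∀ x ∈ A, ∀ y ∉ A, r ≤ edist x y) {x y : X} (hx : x ∈ A) (hy : y ∉ A) :
    r ≤ ultraDist x y := by
  refine le_iInf fun n => le_iInf fun f => le_iInf fun hf0 => le_iInf fun hfn => ?_
  by_contra! hlt
  have hedge (i : Fin n) : edist (f i.castSucc) (f i.succ) < r := (le_iSup _ i).trans_lt hlt
  have hmem : ∀ i, f i ∈ A := Fin.induction (hf0 ▸ hx) fun i hi =>
    by_contra fun hi' => (hA _ hi _ hi').not_gt (hedge i)
  exact hy (hfn ▸ hmem (Fin.last n))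

lemma ultraDist_le_ultraDiam {X : Type*} [MetricSpace X] (x y : X) :
    ultraDist x y ≤ ultraDiam X :=
  le_iSup₂ (f := fun x y : X => ultraDist x y) x y

lemma exists_le_infEDist_of_hausdorffEDist_univ_eq_top {α : Type*} [PseudoEMetricSpace α]
    {s : Set α} (h : hausdorffEDist s Set.univ = ⊤) {r : ℝ≥0∞} (hr : r < ⊤) :
    ∃ t, r ≤ infEDist t s := by
  by_contra! H
  have : hausdorffEDist s Set.univ ≤ r :=
    hausdorffEDist_le_of_infEDist (fun x _ => (infEDist_zero_of_mem (Set.mem_univ x)).trans_le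
      zero_le) fun t _ => (H t).le
  exact hr.not_ge (h ▸ this)

lemma Real.edist_le_edist_of_mem_uIcc {x y z : ℝ} (h : y ∈ Set.uIcc x z) :
    edist x y ≤ edist x z := by
  simpa only [edist_dist] using ENNReal.ofReal_le_ofReal (Real.dist_left_le_of_mem_uIcc h)

lemma le_ultraDist_of_lt_of_le {X : Set ℝ} {t : ℝ} {r : ℝ≥0∞} (hr : r ≤ infEDist t X)
    {a b : X} (hat : (a : ℝ) < t) (htb : t ≤ b) : r ≤ ultraDist a b := by
  refine le_ultraDist_of_forall_le_edist (A := {x : X | (x : ℝ) < t}) ?_ hat htb.not_gt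
  intro x hx y hy
  calc r ≤ infEDist t X := hr
    _ ≤ edist (x : ℝ) t := edist_comm t (x : ℝ) ▸ infEDist_le_edist_of_mem x.2
    _ ≤ edist (x : ℝ) y := Real.edist_le_edist_of_mem_uIcc
        (Set.Icc_subset_uIcc ⟨hx.le, not_lt.mp hy⟩)
    _ = edist x y := (Subtype.edist_eq x y).symm

theorem ultraDiam_eq_top_of_hausdorff_top_general (X : Set ℝ)
    (hup : ¬BddAbove X) (hlow : ¬BddBelow X)
    (hinf : EMetric.hausdorffEdist X (Set.univ : Set ℝ) = ⊤) :
    ultraDiam X = ⊤ := by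
  refine ENNReal.eq_top_of_forall_nnreal_le fun r => ?_
  obtain ⟨t, ht⟩ := exists_le_infEDist_of_hausdorffEDist_univ_eq_top hinf
    (ENNReal.coe_lt_top : (r : ℝ≥0∞) < ⊤)
  obtain ⟨a, haX, hat⟩ := not_bddBelow_iff.mp hlow t
  obtain ⟨b, hbX, htb⟩ := not_bddAbove_iff.mp hup t
  calc (r : ℝ≥0∞) ≤ ultraDist (⟨a, haX⟩ : X) ⟨b, hbX⟩ := le_ultraDist_of_lt_of_le ht hat htb.le
    _ ≤ ultraDiam X := ultraDist_le_ultraDiam _ _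

/-- a nonempty subset of `ℝ`, unbounded above and below, at
infinite Hausdorff distance from `ℝ`, has infinite ultrametric pseudodiameter. -/
theorem ultraDiam_eq_top_of_hausdorff_top (X : Set ℝ) (hX : X.Nonempty)
    (hup : ¬BddAbove X) (hlow : ¬BddBelow X)
    (hinf : EMetric.hausdorffEdist X (Set.univ : Set ℝ) = ⊤) :
    ultraDiam X = ⊤ :=
  ultraDiam_eq_top_of_hausdorff_top_general X hup hlow hinf

end
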